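/- arXiv:2103.08333 — 2 statements merged into one kernel-verified Lean document; each statement's English description precedes it below -/
import Mathlib

section
/- Let J₂ be a Hölder continuous Jacobian on Ω and let μ₂ be the suitable σ-invariant probability with IRN J₂ (so that L*_{log J₂}(μ₂) = μ₂), and let μ₁ be a suitable probability with continuous IRN J₁. Then D_KL(μ₁,μ₂) − D_KL(L*_{log J₂}(μ₁), μ₂) = 0, where L*_{log J₂}(μ₁) is suitable with IRN z ↦ J₁(σ(z))·J₂(z)/J₂(σ(z)). -/
open MeasureTheory

/-- The one-sided shift space `Ω = {1,…,d}^ℕ` on `d` symbols,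
with the product topology and product σ-algebra. -/
abbrev Omega (d : ℕ) : Type := ℕ → Fin d

/-- The left shift `σ(x₁,x₂,x₃,…) = (x₂,x₃,…)`. -/
def shift {d : ℕ} (x : Omega d) : Omega d := fun n => x (n + 1)

/-- Prepend a symbol: `cons a x = ax = (a,x₁,x₂,…)`. -/
def cons {d : ℕ} (a : Fin d) (x : Omega d) : Omega d := fun n =>
  match n with
  | 0 => a
  | Nat.succ k => x k

/-- Hölder continuity with respect to the metric
`d(x,y) = 2^{-min{ j : x_j ≠ y_j}}` on `Ω`: there are `C` and `α > 0` such that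
whenever `x` and `y` agree on their first `n` coordinates (so `d(x,y) ≤ 2⁻ⁿ`),
`|f x - f y| ≤ C * (2⁻ⁿ)^α`. -/
def IsHolder {d : ℕ} (f : Omega d → ℝ) : Prop :=
  Continuous f ∧ ∃ C α : ℝ, 0 < α ∧ ∀ (x y : Omega d) (n : ℕ),
    (∀ k < n, x k = y k) → |f x - f y| ≤ C * ((2 : ℝ)⁻¹ ^ n) ^ α

/-- `μ` is a suitable probability with IRN (inverse Radon–Nikodym derivative
along injective branches) `J`: the function `J` is continuous and strictly
positive, and for every symbol `j` and continuous `φ`,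
`∫ φ(jx) J(jx) dμ(x) = ∫_{[j]} φ dμ` where `[j] = {x | x₁ = j}`. -/
structure IsSuitable {d : ℕ} (μ : Measure (Omega d)) (J : Omega d → ℝ) : Prop where
  cont : Continuous J
  pos : ∀ x, 0 < J x
  irn : ∀ (j : Fin d) (φ : Omega d → ℝ), Continuous φ →
    ∫ x, φ (cons j x) * J (cons j x) ∂μ = ∫ x in {x : Omega d | x 0 = j}, φ x ∂μ

/-- `J` is a Jacobian: continuous, strictly positive, and `Σ_a J(ax) = 1`. -/
def IsJacobian {d : ℕ} (J : Omega d → ℝ) : Prop :=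
  Continuous J ∧ (∀ x, 0 < J x) ∧ ∀ x : Omega d, ∑ a : Fin d, J (cons a x) = 1

/-- `ν = L*_{log J}(μ)`, the image of `μ` under the dual of the Ruelle operator
of the potential `log J` (note `e^{log J(ax)} = J(ax)`): for every continuous
`φ`, `∫ φ dν = ∫ L_{log J}φ dμ = ∫ Σ_a J(ax) φ(ax) dμ(x)`. -/
def IsDualRuelle {d : ℕ} (J : Omega d → ℝ) (μ ν : Measure (Omega d)) : Prop :=
  ∀ φ : Omega d → ℝ, Continuous φ →
    ∫ x, φ x ∂ν = ∫ x, ∑ a : Fin d, J (cons a x) * φ (cons a x) ∂μ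

/-- `μ` is σ-invariant: `∫ φ∘σ dμ = ∫ φ dμ` for all continuous `φ`. -/
def IsShiftInvariant {d : ℕ} (μ : Measure (Omega d)) : Prop :=
  ∀ φ : Omega d → ℝ, Continuous φ → ∫ x, φ (shift x) ∂μ = ∫ x, φ x ∂μ

/-- KL divergence `D_KL(μ₁,μ₂) = ∫ (log J₁ − log J₂) dμ₁` of suitable
probabilities, expressed via their IRNs `J₁`, `J₂`. -/
noncomputable def Dkl {d : ℕ} (μ₁ : Measure (Omega d)) (J₁ J₂ : Omega d → ℝ) : ℝ :=
  ∫ x, (Real.log (J₁ x) - Real.log (J₂ x)) ∂μ₁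
/-!
With `ψ = log J₁ - log J₂`, the integrand of `D_KL(L*_{log J₂} μ₁, μ₂)` is `ψ ∘ σ`.
Since `J₂` is a Jacobian, `L_{log J₂} (ψ ∘ σ) = Σ_a J₂(ax) ψ(x) = ψ`, so by duality
`∫ ψ ∘ σ d(L*_{log J₂} μ₁) = ∫ ψ dμ₁ = D_KL(μ₁, μ₂)`.
-/

section ShiftSpace

variable {d : ℕ}

@[simp]
theorem shift_cons (a : Fin d) (x : Omega d) : shift (cons a x) = x := rfl

theorem continuous_shift : Continuous (shift (d := d)) :=
  continuous_pi fun n => continuous_apply (n + 1)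

theorem IsDualRuelle.integral_comp_shift {J : Omega d → ℝ} {μ ν : Measure (Omega d)}
    (h : IsDualRuelle J μ ν) (hJ : ∀ x, ∑ a : Fin d, J (cons a x) = 1)
    {φ : Omega d → ℝ} (hφ : Continuous φ) :
    ∫ x, φ (shift x) ∂ν = ∫ x, φ x ∂μ := by
  rw [h (fun x => φ (shift x)) (hφ.comp continuous_shift)]
  simp only [shift_cons, ← Finset.sum_mul, hJ, one_mul]

theorem dkl_eq_integral_comp_shift {ν : Measure (Omega d)} {J₁ J₂ K : Omega d → ℝ}
    (hJ₁ : ∀ x, J₁ x ≠ 0) (hJ₂ : ∀ x, J₂ x ≠ 0)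
    (hK : ∀ z, K z = J₁ (shift z) * J₂ z / J₂ (shift z)) :
    Dkl ν K J₂ = ∫ x, (Real.log (J₁ (shift x)) - Real.log (J₂ (shift x))) ∂ν := by
  refine integral_congr_ae (Filter.Eventually.of_forall fun z => ?_)
  simp only [hK z, Real.log_div (mul_ne_zero (hJ₁ _) (hJ₂ _)) (hJ₂ _),
    Real.log_mul (hJ₁ _) (hJ₂ _)]
  ring

end ShiftSpace

theorem dkl_to_equilibrium_invariant_under_dual_ruelle_general
    (d : ℕ) (J₁ J₂ K₁ : Omega d → ℝ)
    (μ₁ ν₁ : Measure (Omega d))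
    (hJ₂ : IsJacobian J₂)
    (h₁ : IsSuitable μ₁ J₁)
    (hν₁ : IsDualRuelle J₂ μ₁ ν₁)
    (hK₁ : ∀ z, K₁ z = J₁ (shift z) * J₂ z / J₂ (shift z)) :
    Dkl μ₁ J₁ J₂ - Dkl ν₁ K₁ J₂ = 0 := by
  obtain ⟨hJ₂_cont, hJ₂_pos, hJ₂_sum⟩ := hJ₂
  have hJ₁_ne : ∀ x, J₁ x ≠ 0 := fun x => (h₁.pos x).ne'
  have hJ₂_ne : ∀ x, J₂ x ≠ 0 := fun x => (hJ₂_pos x).ne'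
  have hψ : Continuous fun x => Real.log (J₁ x) - Real.log (J₂ x) :=
    (h₁.cont.log hJ₁_ne).sub (hJ₂_cont.log hJ₂_ne)
  rw [dkl_eq_integral_comp_shift hJ₁_ne hJ₂_ne hK₁, hν₁.integral_comp_shift hJ₂_sum hψ, Dkl,
    sub_self]

/-- if `J₂` is a Hölder Jacobian with suitable σ-invariant
probability `μ₂` (so `L*_{log J₂}μ₂ = μ₂`) and `μ₁` is suitable with
continuous IRN `J₁`, then `D_KL(μ₁,μ₂) − D_KL(L*_{log J₂}μ₁, μ₂) = 0`,
where `L*_{log J₂}μ₁` is suitable with IRN `z ↦ J₁(σz)·J₂(z)/J₂(σz)`. -/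
theorem dkl_to_equilibrium_invariant_under_dual_ruelle
    (d : ℕ) (hd : 2 ≤ d) (J₁ J₂ K₁ : Omega d → ℝ)
    (μ₁ μ₂ ν₁ : Measure (Omega d))
    [IsProbabilityMeasure μ₁] [IsProbabilityMeasure μ₂] [IsProbabilityMeasure ν₁]
    (hJ₂ : IsJacobian J₂) (hJ₂H : IsHolder J₂)
    (h₂ : IsSuitable μ₂ J₂) (hinv₂ : IsShiftInvariant μ₂)
    (hfix : IsDualRuelle J₂ μ₂ μ₂)
    (h₁ : IsSuitable μ₁ J₁)
    (hν₁ : IsDualRuelle J₂ μ₁ ν₁)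
    (hK₁ : ∀ z, K₁ z = J₁ (shift z) * J₂ z / J₂ (shift z))
    (hs₁ : IsSuitable ν₁ K₁) :
    Dkl μ₁ J₁ J₂ - Dkl ν₁ K₁ J₂ = 0 :=
  dkl_to_equilibrium_invariant_under_dual_ruelle_general d J₁ J₂ K₁ μ₁ ν₁ hJ₂ h₁ hν₁ hK₁
end

section
/- Let ν be a suitable σ-invariant Borel probability on Ω with continuous IRN J_ν, and let J be any continuous Jacobian on Ω. Then ∫ log J dν ≤ ∫ log J_ν dν. Equivalently, if μ₂ is a suitable probability whose IRN J₂ is a Jacobian, then D_KL(ν, μ₂) = ∫ (log J_ν − log J₂) dν ≥ 0. -/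
/-!
Gibbs' inequality for the IRN. Summing the IRN identity over the cylinders `[j]` gives
`∫ φ dν = ∫ Σ_a φ(ax) J_ν(ax) dν(x)`, and for `φ = J / J_ν` the Jacobian condition
`Σ_a J(ax) = 1` turns this into `∫ J / J_ν dν = 1`. Integrating `log t ≤ t - 1` at
`t = J / J_ν` then yields `∫ log J dν - ∫ log J_ν dν ≤ 1 - 1 = 0`.
-/

open MeasureTheory

theorem Continuous.integrable_of_compactSpace {X E : Type*} [TopologicalSpace X] [CompactSpace X]
    [MeasurableSpace X] [OpensMeasurableSpace X] [NormedAddCommGroup E]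
    {μ : Measure X} [IsFiniteMeasure μ] {f : X → E} (hf : Continuous f) : Integrable f μ :=
  hf.integrable_of_hasCompactSupport (.of_compactSpace f)

theorem integral_eq_sum_setIntegral_preimage {X ι E : Type*} [MeasurableSpace X]
    [Fintype ι] [MeasurableSpace ι] [MeasurableSingletonClass ι]
    [NormedAddCommGroup E] [NormedSpace ℝ E] {μ : Measure X} {g : X → ι}
    (hg : Measurable g) {f : X → E} (hf : Integrable f μ) :
    ∫ x, f x ∂μ = ∑ i, ∫ x in g ⁻¹' {i}, f x ∂μ := by
  have hcover : (⋃ i, g ⁻¹' {i}) = Set.univ := by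
    ext x
    simp
  rw [← integral_iUnion_fintype (fun i => hg (MeasurableSet.singleton i))
    (fun i j hij => Set.disjoint_left.2 fun x hi hj => hij (hi.symm.trans hj))
    (fun _ => hf.integrableOn), hcover, setIntegral_univ]

theorem integral_log_sub_log_le_integral_div_sub_one {X : Type*} [MeasurableSpace X]
    {μ : Measure X} [IsProbabilityMeasure μ] {f g : X → ℝ}
    (hf : ∀ x, 0 < f x) (hg : ∀ x, 0 < g x) (hlogf : Integrable (fun x => Real.log (f x)) μ)
    (hlogg : Integrable (fun x => Real.log (g x)) μ) (hfg : Integrable (fun x => f x / g x) μ) :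
    ∫ x, Real.log (f x) ∂μ - ∫ x, Real.log (g x) ∂μ ≤ ∫ x, f x / g x ∂μ - 1 := by
  have hpointwise : ∀ x, Real.log (f x) - Real.log (g x) ≤ f x / g x - 1 := fun x => by
    rw [← Real.log_div (hf x).ne' (hg x).ne']
    exact Real.log_le_sub_one_of_pos (div_pos (hf x) (hg x))
  calc ∫ x, Real.log (f x) ∂μ - ∫ x, Real.log (g x) ∂μ
      = ∫ x, (Real.log (f x) - Real.log (g x)) ∂μ := (integral_sub hlogf hlogg).symm
    _ ≤ ∫ x, (f x / g x - 1) ∂μ :=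
        integral_mono (hlogf.sub hlogg) (hfg.sub (integrable_const 1)) hpointwise
    _ = ∫ x, f x / g x ∂μ - 1 := by simp [integral_sub hfg (integrable_const 1)]

section ShiftSpace

variable {d : ℕ}

theorem continuous_cons (a : Fin d) : Continuous (cons a : Omega d → Omega d) :=
  continuous_pi fun n => by
    cases n with
    | zero => exact continuous_const
    | succ k => exact continuous_apply k

theorem IsSuitable.isDualRuelle {μ : Measure (Omega d)} [IsFiniteMeasure μ] {J : Omega d → ℝ}
    (hμ : IsSuitable μ J) : IsDualRuelle J μ μ := by
  intro φ hφ
  calc ∫ x, φ x ∂μ = ∑ j, ∫ x in {x : Omega d | x 0 = j}, φ x ∂μ :=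
        integral_eq_sum_setIntegral_preimage (measurable_pi_apply 0) hφ.integrable_of_compactSpace
    _ = ∑ j, ∫ x, φ (cons j x) * J (cons j x) ∂μ :=
        Finset.sum_congr rfl fun j _ => (hμ.irn j φ hφ).symm
    _ = ∑ j, ∫ x, J (cons j x) * φ (cons j x) ∂μ := by simp only [mul_comm]
    _ = ∫ x, ∑ j, J (cons j x) * φ (cons j x) ∂μ := (integral_finsetSum _ fun j _ =>
        ((hμ.cont.comp (continuous_cons j)).mul
          (hφ.comp (continuous_cons j))).integrable_of_compactSpace).symm

theorem IsSuitable.integral_div_eq_one {μ : Measure (Omega d)} [IsProbabilityMeasure μ]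
    {Jμ J : Omega d → ℝ} (hμ : IsSuitable μ Jμ) (hJ : IsJacobian J) :
    ∫ x, J x / Jμ x ∂μ = 1 := by
  obtain ⟨hJc, -, hJsum⟩ := hJ
  have hcancel : ∀ x, Jμ x * (J x / Jμ x) = J x := fun x => mul_div_cancel₀ _ (hμ.pos x).ne'
  rw [hμ.isDualRuelle (fun x => J x / Jμ x) (hJc.div hμ.cont fun x => (hμ.pos x).ne')]
  simp only [hcancel, hJsum, integral_const, probReal_univ, one_smul]

end ShiftSpace

theorem log_jacobian_integral_le_general
    (d : ℕ) (Jν J : Omega d → ℝ)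
    (ν : Measure (Omega d)) [IsProbabilityMeasure ν]
    (hν : IsSuitable ν Jν)
    (hJ : IsJacobian J) :
    ∫ x, Real.log (J x) ∂ν ≤ ∫ x, Real.log (Jν x) ∂ν := by
  have hlog_le := integral_log_sub_log_le_integral_div_sub_one (μ := ν) hJ.2.1 hν.pos
    (hJ.1.log fun x => (hJ.2.1 x).ne').integrable_of_compactSpace
    (hν.cont.log fun x => (hν.pos x).ne').integrable_of_compactSpace
    (hJ.1.div hν.cont fun x => (hν.pos x).ne').integrable_of_compactSpace
  linarith [hν.integral_div_eq_one hJ]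

/-- nonnegativity of KL divergence: if `ν` is a suitable
σ-invariant probability with continuous IRN `J_ν` and `J` is any continuous
Jacobian, then `∫ log J dν ≤ ∫ log J_ν dν`; equivalently, for a suitable `μ₂`
whose IRN is a Jacobian, `D_KL(ν,μ₂) ≥ 0`. -/
theorem log_jacobian_integral_le
    (d : ℕ) (hd : 2 ≤ d) (Jν J : Omega d → ℝ)
    (ν : Measure (Omega d)) [IsProbabilityMeasure ν]
    (hν : IsSuitable ν Jν) (hνinv : IsShiftInvariant ν)
    (hJ : IsJacobian J) :
    ∫ x, Real.log (J x) ∂ν ≤ ∫ x, Real.log (Jν x) ∂ν :=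
  log_jacobian_integral_le_general d Jν J ν hν hJ
end
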